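/- arXiv:math/0405216 — 8 statements merged into one kernel-verified Lean document; each statement's English description precedes it below -/
import Mathlib

section
/- Let R be a unital associative ring, M a nonzero left R-module, Ω an infinite set, N = ⊕_{i∈Ω} M, and E = End_R(N). Suppose U ⊆ E has a full moiety Σ ⊆ Ω. Then there exist elements x, y ∈ E such that E = yUy + yUyx + xyUy + xyUyx (where for subsets A, B ⊆ E, AB denotes the set of products and A + B the set of sums, and yUy = {yuy : u ∈ U}, etc.). -/
open Pointwise DirectSum Cardinal

/-- The submodule of the direct sum `⨁ i : Ω, M` consisting of elements supported on `S`. -/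
def suppSubmodule (R : Type*) [Ring R] (M : Type*) [AddCommGroup M] [Module R M]
    (Ω : Type*) (S : Set Ω) : Submodule R (⨁ _ : Ω, M) where
  carrier := {x | ∀ i ∉ S, x i = 0}
  add_mem' := fun {a b} ha hb i hi => by simp [ha i hi, hb i hi]
  zero_mem' := fun i _ => by simp
  smul_mem' := fun r a ha i hi => by rw [DirectSum.smul_apply, ha i hi, smul_zero]

/-- `S ⊆ Ω` is full with respect to `U ⊆ E`: every endomorphism of `M^S` is induced by
restriction of a member of `U` carrying `M^S` into `M^S` and `M^{Ω∖S}` into `M^{Ω∖S}`. -/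
def IsFull (R : Type*) [Ring R] (M : Type*) [AddCommGroup M] [Module R M]
    (Ω : Type*) (U : Set (Module.End R (⨁ _ : Ω, M))) (S : Set Ω) : Prop :=
  ∀ g : Module.End R (suppSubmodule R M Ω S), ∃ f ∈ U,
    (suppSubmodule R M Ω S).map f ≤ suppSubmodule R M Ω S ∧
    (suppSubmodule R M Ω Sᶜ).map f ≤ suppSubmodule R M Ω Sᶜ ∧
    ∀ v : suppSubmodule R M Ω S, f (v : ⨁ _ : Ω, M) = (g v : ⨁ _ : Ω, M)

section Aux
variable {R : Type*} [Ring R] {M : Type*} [AddCommGroup M] [Module R M] {Ω : Type*}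

/-- projection onto coordinates in `S` -/
def projS (R : Type*) [Ring R] (M : Type*) [AddCommGroup M] [Module R M]
    (Ω : Type*) (S : Set Ω) [DecidablePred (· ∈ S)] : Module.End R (⨁ _ : Ω, M) :=
  DFinsupp.filterLinearMap R (fun _ : Ω => M) (· ∈ S)

lemma projS_apply (S : Set Ω) [DecidablePred (· ∈ S)] (v : ⨁ _ : Ω, M) (i : Ω) :
    projS R M Ω S v i = if i ∈ S then v i else 0 :=
  DFinsupp.filter_apply _ _ _

/-- the permutation map induced by an involution π of Ω -/
def swapMap (R : Type*) [Ring R] (M : Type*) [AddCommGroup M] [Module R M]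
    (Ω : Type*) (π : Ω → Ω) (hπ : Function.LeftInverse π π) :
    Module.End R (⨁ _ : Ω, M) where
  toFun v := DFinsupp.comapDomain' π hπ v
  map_add' a b := DFinsupp.comapDomain'_add π hπ a b
  map_smul' r a := DFinsupp.comapDomain'_smul π hπ r a

lemma swapMap_apply (π : Ω → Ω) (hπ : Function.LeftInverse π π) (v : ⨁ _ : Ω, M) (i : Ω) :
    swapMap R M Ω π hπ v i = v (π i) := rfl

lemma peirce_decomp {A : Type*} [Ring A] (e f : A) :
    f = e*f*e + e*f*(1-e) + (1-e)*f*e + (1-e)*f*(1-e) := by noncomm_ring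

lemma corner_idem {A : Type*} [Ring A] {e : A} (he : e * e = e) (t : A) :
    e * (e * t * e) * e = e * t * e := by
  calc e * (e * t * e) * e = (e * e) * t * (e * e) := by noncomm_ring
  _ = e * t * e := by rw [he]

lemma assoc_step {A : Type*} [Ring A] (e x f : A) :
    e*f*e + e*f*(x*e*x) + (x*e*x)*f*e + (x*e*x)*f*(x*e*x)
      = e*f*e + (e*(f*x)*e)*x + x*(e*(x*f)*e) + x*(e*(x*f*x)*e)*x := by
  simp only [mul_assoc]

end Aux

theorem stmt0 (R : Type*) [Ring R] (M : Type*) [AddCommGroup M] [Module R M]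
    [Nontrivial M] (Ω : Type*) [Infinite Ω]
    (U : Set (Module.End R (⨁ _ : Ω, M))) (S : Set Ω)
    (hmoiety : #(↥S) = #Ω ∧ #(↥(Sᶜ : Set Ω)) = #Ω)
    (hfull : IsFull R M Ω U S) :
    ∃ x y : Module.End R (⨁ _ : Ω, M),
      ({y} * U * {y} + {y} * U * {y} * {x} + {x} * ({y} * U * {y})
        + {x} * ({y} * U * {y}) * {x} : Set (Module.End R (⨁ _ : Ω, M))) = Set.univ := by
  classical
  obtain ⟨hS, hSc⟩ := hmoiety
  obtain ⟨σ⟩ : Nonempty (↥S ≃ ↥(Sᶜ : Set Ω)) := Cardinal.eq.mp (hS.trans hSc.symm)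
  set π : Ω → Ω := fun i =>
    if h : i ∈ S then (σ ⟨i, h⟩ : Ω) else (σ.symm ⟨i, h⟩ : Ω) with hπdef
  have hmem1 : ∀ i, i ∈ S → π i ∉ S := by
    intro i h
    simp only [hπdef, dif_pos h]
    exact (σ ⟨i, h⟩).2
  have hmem2 : ∀ i, i ∉ S → π i ∈ S := by
    intro i h
    simp only [hπdef, dif_neg h]
    exact (σ.symm ⟨i, h⟩).2
  have hinv : Function.LeftInverse π π := by
    intro i
    by_cases h : i ∈ S
    · have h2 : π i ∉ S := hmem1 i h
      simp only [hπdef, dif_pos h] at h2 ⊢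
      simp only [dif_neg h2]
      exact congrArg Subtype.val (σ.symm_apply_apply ⟨i, h⟩)
    · have h2 : π i ∈ S := hmem2 i h
      simp only [hπdef, dif_neg h] at h2 ⊢
      simp only [dif_pos h2]
      exact congrArg Subtype.val (σ.apply_symm_apply ⟨i, h⟩)
  set e : Module.End R (⨁ _ : Ω, M) := projS R M Ω S with hedef
  set x : Module.End R (⨁ _ : Ω, M) := swapMap R M Ω π hinv with hxdef
  have he : ∀ (v : ⨁ _ : Ω, M) i, e v i = if i ∈ S then v i else 0 := projS_apply S
  have hx : ∀ (v : ⨁ _ : Ω, M) i, x v i = v (π i) := swapMap_apply π hinv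
  have hee : e * e = e := by
    apply LinearMap.ext; intro v
    apply DFinsupp.ext; intro i
    show e (e v) i = e v i
    rw [he, he]
    by_cases h : i ∈ S <;> simp [h, he]
  have hxx : x * x = 1 := by
    apply LinearMap.ext; intro v
    apply DFinsupp.ext; intro i
    show x (x v) i = v i
    rw [hx, hx, hinv i]
  have hxex : x * e * x = 1 - e := by
    apply LinearMap.ext; intro v
    apply DFinsupp.ext; intro i
    show x (e (x v)) i = (1 - e) v i
    rw [hx, he]
    have : ((1 - e) v) i = v i - e v i := by
      rw [LinearMap.sub_apply, Module.End.one_apply, DFinsupp.sub_apply]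
    rw [this, he]
    by_cases h : i ∈ S
    · rw [if_neg (hmem1 i h), if_pos h, sub_self]
    · rw [if_pos (hmem2 i h), hx, hinv i, if_neg h, sub_zero]
  -- key surjectivity of u ↦ e u e onto the Peirce corner
  have key : ∀ ψ : Module.End R (⨁ _ : Ω, M), e * ψ * e = ψ → ∃ u ∈ U, e * u * e = ψ := by
    intro ψ hψ
    have hψA : ∀ w : ⨁ _ : Ω, M, ψ w ∈ suppSubmodule R M Ω S := by
      intro w i hi
      have : ψ w = e (ψ (e w)) := by
        conv_lhs => rw [← hψ]
        simp only [Module.End.mul_apply]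
      rw [this, he, if_neg hi]
    have heA : ∀ w : ⨁ _ : Ω, M, e w ∈ suppSubmodule R M Ω S := by
      intro w i hi
      rw [he, if_neg hi]
    let g : Module.End R (suppSubmodule R M Ω S) :=
      { toFun := fun v => ⟨ψ v, hψA v⟩
        map_add' := by intro a b; ext1; simp
        map_smul' := by intro r a; ext1; simp }
    obtain ⟨u, hu, -, -, hres⟩ := hfull g
    refine ⟨u, hu, ?_⟩
    apply LinearMap.ext; intro w
    have h1 : u (e w) = ψ (e w) := hres ⟨e w, heA w⟩
    show e (u (e w)) = ψ w
    rw [h1]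
    calc e (ψ (e w)) = (e * ψ * e) w := by simp only [Module.End.mul_apply]
    _ = ψ w := by rw [hψ]
  refine ⟨x, e, ?_⟩
  ext f
  simp only [Set.mem_univ, iff_true]
  have hcl : ∀ t : Module.End R (⨁ _ : Ω, M), e * (e * t * e) * e = e * t * e :=
    corner_idem hee
  obtain ⟨u₁, hu₁, h₁⟩ := key (e * f * e) (hcl f)
  obtain ⟨u₂, hu₂, h₂⟩ := key (e * (f * x) * e) (hcl (f * x))
  obtain ⟨u₃, hu₃, h₃⟩ := key (e * (x * f) * e) (hcl (x * f))
  obtain ⟨u₄, hu₄, h₄⟩ := key (e * (x * f * x) * e) (hcl (x * f * x))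
  have hfe : f = (e * u₁ * e) + (e * u₂ * e) * x + x * (e * u₃ * e) + x * (e * u₄ * e) * x := by
    rw [h₁, h₂, h₃, h₄]
    calc f = e*f*e + e*f*(1-e) + (1-e)*f*e + (1-e)*f*(1-e) := peirce_decomp e f
    _ = e*f*e + e*f*(x*e*x) + (x*e*x)*f*e + (x*e*x)*f*(x*e*x) := by rw [hxex]
    _ = (e*f*e) + (e*(f*x)*e)*x + x*(e*(x*f)*e) + x*(e*(x*f*x)*e)*x := assoc_step e x f
  rw [hfe]
  refine Set.add_mem_add (Set.add_mem_add (Set.add_mem_add ?_ ?_) ?_) ?_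
  · exact Set.mul_mem_mul (Set.mul_mem_mul rfl hu₁) rfl
  · exact Set.mul_mem_mul (Set.mul_mem_mul (Set.mul_mem_mul rfl hu₂) rfl) rfl
  · exact Set.mul_mem_mul rfl (Set.mul_mem_mul (Set.mul_mem_mul rfl hu₃) rfl)
  · exact Set.mul_mem_mul (Set.mul_mem_mul rfl (Set.mul_mem_mul (Set.mul_mem_mul rfl hu₄) rfl)) rfl
end

section
/- Let R be a unital associative ring, M a nonzero left R-module, Ω an infinite set, N = ⊕_{i∈Ω} M, and E = End_R(N). Let (U_i)_{i∈I} be any family of subsets of E such that ⋃_{i∈I} U_i = E and |I| ≤ |Ω|. Then Ω contains a moiety which is full with respect to some U_i. -/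
open Pointwise DirectSum Cardinal

/-!
Write `Ω` as `Ω × Ω`; the fibres of the first projection are `|Ω|` pairwise disjoint moieties,
and `I` injects into them. If no fibre `Σᵢ` were full for `Uᵢ`, pick for each `i` an
endomorphism `gᵢ` of `M^{Σᵢ}` that no member of `Uᵢ` induces. The block-diagonal endomorphism
of `N` acting as `gᵢ` on each `M^{Σᵢ}` lies in some `Uᵢ` and induces `gᵢ`: a contradiction.
-/

namespace suppSubmodule

variable {R : Type*} [Ring R] {M : Type*} [AddCommGroup M] [Module R M] {Ω : Type*}
  [DecidableEq Ω]

omit [DecidableEq Ω] in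
lemma mono {S T : Set Ω} (h : S ⊆ T) : suppSubmodule R M Ω S ≤ suppSubmodule R M Ω T :=
  fun _ hx i hi => hx i (fun hiS => hi (h hiS))

lemma of_mem {S : Set Ω} {j : Ω} (hj : j ∈ S) (m : M) :
    DirectSum.of (fun _ : Ω => M) j m ∈ suppSubmodule R M Ω S := by
  intro i hi
  exact DirectSum.of_eq_of_ne _ _ _ (by rintro rfl; exact hi hj)

lemma le_iff {S : Set Ω} {P : Submodule R (⨁ _ : Ω, M)} :
    suppSubmodule R M Ω S ≤ P ↔ ∀ j ∈ S, ∀ m : M, DirectSum.of (fun _ : Ω => M) j m ∈ P := by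
  classical
  refine ⟨fun h j hj m => h (of_mem hj m), fun h x hx => ?_⟩
  rw [← DirectSum.sum_support_of x]
  refine Submodule.sum_mem _ fun j hj => h j ?_ _
  by_contra hjS
  exact DFinsupp.mem_support_iff.1 hj (hx j hjS)

lemma linearMap_ext {S : Set Ω} {N : Type*} [AddCommGroup N] [Module R N]
    {φ ψ : suppSubmodule R M Ω S →ₗ[R] N}
    (h : ∀ j (hj : j ∈ S) (m : M), φ ⟨_, of_mem hj m⟩ = ψ ⟨_, of_mem hj m⟩) : φ = ψ := by
  ext w
  have hle : suppSubmodule R M Ω S ≤ (LinearMap.eqLocus φ ψ).map (suppSubmodule R M Ω S).subtype :=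
    le_iff.2 fun j hj m => ⟨_, h j hj m, rfl⟩
  obtain ⟨w', hw', hw'w⟩ := hle w.2
  rwa [← Subtype.ext hw'w]

end suppSubmodule

section BlockDiagonal

variable (R : Type*) [Ring R] (M : Type*) [AddCommGroup M] [Module R M] {Ω J : Type*}
  [DecidableEq Ω]

noncomputable def blockDiagonal (p : Ω → J)
    (G : ∀ j, Module.End R (suppSubmodule R M Ω (p ⁻¹' {j}))) : Module.End R (⨁ _ : Ω, M) :=
  DirectSum.toModule R Ω _ fun x =>
    (suppSubmodule R M Ω _).subtype ∘ₗ G (p x) ∘ₗ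
      LinearMap.codRestrict _ (DirectSum.lof R Ω (fun _ => M) x)
        (suppSubmodule.of_mem (Set.mem_singleton (p x)))

variable {R M} (p : Ω → J) (G : ∀ j, Module.End R (suppSubmodule R M Ω (p ⁻¹' {j})))

lemma blockDiagonal_of (x : Ω) (m : M) :
    blockDiagonal R M p G (DirectSum.of (fun _ : Ω => M) x m)
      = G (p x) ⟨DirectSum.of (fun _ : Ω => M) x m,
          suppSubmodule.of_mem (S := p ⁻¹' {p x}) rfl m⟩ :=
  DirectSum.toModule_lof (M := fun _ : Ω => M) R x m

lemma blockDiagonal_comp_subtype (j : J) :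
    blockDiagonal R M p G ∘ₗ (suppSubmodule R M Ω (p ⁻¹' {j})).subtype
      = (suppSubmodule R M Ω (p ⁻¹' {j})).subtype ∘ₗ G j := by
  refine suppSubmodule.linearMap_ext fun x (hx : p x = j) m => ?_
  subst hx
  exact blockDiagonal_of p G x m

lemma map_blockDiagonal_le (T : Set J) :
    (suppSubmodule R M Ω (p ⁻¹' T)).map (blockDiagonal R M p G) ≤ suppSubmodule R M Ω (p ⁻¹' T) :=
  Submodule.map_le_iff_le_comap.2 <| suppSubmodule.le_iff.2 fun x hx m => by
    rw [Submodule.mem_comap, blockDiagonal_of]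
    exact suppSubmodule.mono (Set.preimage_mono (f := p) (Set.singleton_subset_iff.2 hx)) (G _ _).2

end BlockDiagonal

theorem exists_isFull_fiber {R : Type*} [Ring R] {M : Type*} [AddCommGroup M] [Module R M]
    {Ω I J : Type*} (p : Ω → J) {σ : I → J} (hσ : Function.Injective σ)
    (U : I → Set (Module.End R (⨁ _ : Ω, M))) (hU : (⋃ i, U i) = Set.univ) :
    ∃ i, IsFull R M Ω (U i) (p ⁻¹' {σ i}) := by
  classical
  by_contra! hnot
  have hG : ∀ j, ∃ g : Module.End R (suppSubmodule R M Ω (p ⁻¹' {j})), ∀ i, σ i = j →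
      ∀ f ∈ U i, (suppSubmodule R M Ω (p ⁻¹' {j})).map f ≤ suppSubmodule R M Ω (p ⁻¹' {j}) →
        (suppSubmodule R M Ω (p ⁻¹' {j})ᶜ).map f ≤ suppSubmodule R M Ω (p ⁻¹' {j})ᶜ →
        ∃ v : suppSubmodule R M Ω (p ⁻¹' {j}), f (v : ⨁ _ : Ω, M) ≠ (g v : ⨁ _ : Ω, M) := by
    intro j
    by_cases hj : j ∈ Set.range σ
    · obtain ⟨i, rfl⟩ := hj
      have hi := hnot i
      simp only [IsFull, not_forall, not_exists, not_and] at hi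
      obtain ⟨g, hg⟩ := hi
      refine ⟨g, fun i' hi' => ?_⟩
      obtain rfl := hσ hi'
      simpa using hg
    · exact ⟨0, fun i hi => absurd ⟨i, hi⟩ hj⟩
  choose G hG using hG
  obtain ⟨i, hi⟩ := Set.mem_iUnion.1 (hU.symm ▸ Set.mem_univ (blockDiagonal R M p G))
  have hcompl := map_blockDiagonal_le p G {σ i}ᶜ
  rw [Set.preimage_compl] at hcompl
  obtain ⟨v, hv⟩ := hG (σ i) i rfl _ hi (map_blockDiagonal_le p G _) hcompl
  exact hv (LinearMap.congr_fun (blockDiagonal_comp_subtype p G (σ i)) v)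

lemma mk_eq_of_fiber_subset {Ω : Type*} (e : Ω ≃ Ω × Ω) {ω : Ω} {S : Set Ω}
    (hS : Prod.fst ∘ e ⁻¹' {ω} ⊆ S) : #S = #Ω := by
  refine le_antisymm (mk_set_le S) (mk_le_of_injective (f := fun j => ⟨e.symm (ω, j), hS ?_⟩) ?_)
  · simp
  · intro a b hab
    simpa using congrArg (fun z : S => (e z).2) hab

universe u v

theorem stmt2_general (R : Type*) [Ring R] (M : Type*) [AddCommGroup M] [Module R M]
    (Ω : Type u) [Infinite Ω] (I : Type v)
    (U : I → Set (Module.End R (⨁ _ : Ω, M)))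
    (hunion : (⋃ i : I, U i) = Set.univ)
    (hcard : Cardinal.lift.{u} #I ≤ Cardinal.lift.{v} #Ω) :
    ∃ (i : I) (S : Set Ω), (#(↥S) = #Ω ∧ #(↥(Sᶜ : Set Ω)) = #Ω) ∧ IsFull R M Ω (U i) S := by
  obtain ⟨ι⟩ : Nonempty (I ↪ Ω) := Cardinal.lift_mk_le'.mp hcard
  obtain ⟨e⟩ : Nonempty (Ω ≃ Ω × Ω) := by
    rw [← Cardinal.eq, ← Cardinal.mul_def]
    exact (Cardinal.mul_eq_self (Cardinal.aleph0_le_mk Ω)).symm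
  obtain ⟨i, hi⟩ := exists_isFull_fiber (Prod.fst ∘ e) ι.injective U hunion
  obtain ⟨ω, hω⟩ := exists_ne (ι i)
  refine ⟨i, _, ⟨mk_eq_of_fiber_subset e subset_rfl, mk_eq_of_fiber_subset e (ω := ω) ?_⟩, hi⟩
  exact fun x (hx : (e x).1 = ω) (hx' : (e x).1 = ι i) => hω (hx.symm.trans hx')

theorem stmt2 (R : Type*) [Ring R] (M : Type*) [AddCommGroup M] [Module R M]
    [Nontrivial M] (Ω : Type u) [Infinite Ω] (I : Type v)
    (U : I → Set (Module.End R (⨁ _ : Ω, M)))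
    (hunion : (⋃ i : I, U i) = Set.univ)
    (hcard : Cardinal.lift.{u} #I ≤ Cardinal.lift.{v} #Ω) :
    ∃ (i : I) (S : Set Ω), (#(↥S) = #Ω ∧ #(↥(Sᶜ : Set Ω)) = #Ω) ∧ IsFull R M Ω (U i) S :=
  stmt2_general R M Ω I U hunion hcard
end

section
/- Let R be a unital associative ring, M a nonzero left R-module, Ω an infinite set, and E = End_R(⊕_{i∈Ω} M). Suppose (R_i)_{i∈I} is a chain of subrings of E (i.e., a family of subrings totally ordered by inclusion) such that ⋃_{i∈I} R_i = E and |I| ≤ |Ω|. Then E = R_i for some i ∈ I. In particular, E is not the union of a chain of ≤ |Ω| proper subrings. -/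
open DirectSum Cardinal

universe u v

section Aux

variable (R : Type*) [Ring R] (M : Type*) [AddCommGroup M] [Module R M]
variable {Ω : Type u} {I : Type v} [DecidableEq Ω] [DecidableEq I] [DecidableEq (I × Ω)]

/-- Embedding of `⨁ _ : Ω, M` as the `i`-th block of `⨁ _ : I × Ω, M`. -/
noncomputable def iotaMap (i : I) : (⨁ _ : Ω, M) →ₗ[R] ⨁ _ : I × Ω, M :=
  DirectSum.toModule R Ω _ (fun ω => DirectSum.lof R (I × Ω) (fun _ => M) (i, ω))

/-- Projection onto the `i`-th block of `⨁ _ : I × Ω, M`. -/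
noncomputable def piMap (i : I) : (⨁ _ : I × Ω, M) →ₗ[R] ⨁ _ : Ω, M :=
  DirectSum.toModule R (I × Ω) (⨁ _ : Ω, M)
    (fun p => (if p.1 = i then DirectSum.lof R Ω (fun _ => M) p.2 else 0 :
      M →ₗ[R] ⨁ _ : Ω, M))

theorem piMap_comp_iotaMap (i : I) :
    (piMap R M (Ω := Ω) i) ∘ₗ (iotaMap R M (Ω := Ω) i) = LinearMap.id := by
  apply DirectSum.linearMap_ext
  intro ω
  ext m
  simp [iotaMap, piMap, DirectSum.toModule_lof]

/-- Block-diagonal endomorphism built from a family of endomorphisms. -/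
noncomputable def blockMap (f : I → Module.End R (⨁ _ : Ω, M)) :
    Module.End R (⨁ _ : I × Ω, M) :=
  DirectSum.toModule R (I × Ω) _
    (fun p => (iotaMap R M p.1) ∘ₗ (f p.1) ∘ₗ DirectSum.lof R Ω (fun _ => M) p.2)

theorem piMap_blockMap_iotaMap (f : I → Module.End R (⨁ _ : Ω, M)) (i : I) :
    (piMap R M (Ω := Ω) i) ∘ₗ (blockMap R M f) ∘ₗ (iotaMap R M (Ω := Ω) i) = f i := by
  apply DirectSum.linearMap_ext
  intro ω
  ext m
  have h1 : iotaMap R M (Ω := Ω) i (DirectSum.lof R Ω (fun _ => M) ω m)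
      = DirectSum.lof R (I × Ω) (fun _ => M) (i, ω) m := by
    simp [iotaMap, DirectSum.toModule_lof]
  have h2 : blockMap R M f (DirectSum.lof R (I × Ω) (fun _ => M) (i, ω) m)
      = iotaMap R M i (f i (DirectSum.lof R Ω (fun _ => M) ω m)) := by
    simp [blockMap, DirectSum.toModule_lof]
  have h3 : ∀ y, piMap R M (Ω := Ω) i (iotaMap R M i y) = y := fun y =>
    LinearMap.congr_fun (piMap_comp_iotaMap R M i) y
  simp only [LinearMap.comp_apply, h1, h2, h3]

end Aux

theorem stmt4 (R : Type*) [Ring R] (M : Type*) [AddCommGroup M] [Module R M]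
    [Nontrivial M] (Ω : Type u) [Infinite Ω] (I : Type v)
    (Rs : I → Subring (Module.End R (⨁ _ : Ω, M)))
    (hchain : ∀ i j : I, Rs i ≤ Rs j ∨ Rs j ≤ Rs i)
    (hunion : (⋃ i : I, (Rs i : Set (Module.End R (⨁ _ : Ω, M)))) = Set.univ)
    (hcard : Cardinal.lift.{u} #I ≤ Cardinal.lift.{v} #Ω) :
    ∃ i : I, Rs i = ⊤ := by
  classical
  by_contra hcon
  push_neg at hcon
  have hmem : ∀ x : Module.End R (⨁ _ : Ω, M), ∃ i, x ∈ Rs i := by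
    intro x
    have : x ∈ ⋃ i : I, (Rs i : Set (Module.End R (⨁ _ : Ω, M))) := by
      rw [hunion]; exact Set.mem_univ x
    exact Set.mem_iUnion.mp this
  haveI : Nonempty I := (hmem 0).elim fun i _ => ⟨i⟩
  -- an equivalence `I × Ω ≃ Ω`
  have hΩ : (ℵ₀ : Cardinal.{u}) ≤ #Ω := Cardinal.infinite_iff.mp ‹Infinite Ω›
  have hIΩ : #(I × Ω) = Cardinal.lift.{v} #Ω := by
    rw [Cardinal.mk_prod]
    exact Cardinal.mul_eq_right (Cardinal.aleph0_le_lift.mpr hΩ) hcard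
      (by simp)
  have key : Nonempty (I × Ω ≃ Ω) := Cardinal.lift_mk_eq'.mp
    (by rw [hIΩ, Cardinal.lift_lift])
  obtain ⟨e⟩ := key
  let ρ : (⨁ _ : Ω, M) ≃ₗ[R] ⨁ _ : I × Ω, M :=
    (DirectSum.lequivCongrLeft R e.symm : (⨁ _ : Ω, M) ≃ₗ[R] ⨁ _ : I × Ω, M)
  let U : I → Module.End R (⨁ _ : Ω, M) := fun i => (ρ.symm : (⨁ _ : I × Ω, M) →ₗ[R] ⨁ _ : Ω, M) ∘ₗ iotaMap R M i
  let V : I → Module.End R (⨁ _ : Ω, M) := fun i => piMap R M i ∘ₗ (ρ : (⨁ _ : Ω, M) →ₗ[R] ⨁ _ : I × Ω, M)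
  have hkey : ∀ (f : I → Module.End R (⨁ _ : Ω, M)) (i : I),
      V i * ((ρ.symm : (⨁ _ : I × Ω, M) →ₗ[R] ⨁ _ : Ω, M) ∘ₗ blockMap R M f
        ∘ₗ (ρ : (⨁ _ : Ω, M) →ₗ[R] ⨁ _ : I × Ω, M)) * U i = f i := by
    intro f i
    apply LinearMap.ext
    intro x
    have := LinearMap.congr_fun (piMap_blockMap_iotaMap R M f i) x
    simp only [LinearMap.comp_apply] at this
    simp only [Module.End.mul_apply, LinearMap.comp_apply, LinearEquiv.coe_coe,
      LinearEquiv.apply_symm_apply, U, V]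
    exact this
  -- choose a dominating index for each i
  have max2 : ∀ a b : I, ∃ c, Rs a ≤ Rs c ∧ Rs b ≤ Rs c := by
    intro a b
    rcases hchain a b with h | h
    · exact ⟨b, h, le_rfl⟩
    · exact ⟨a, le_rfl, h⟩
  have hUV : ∀ i : I, ∃ k, Rs i ≤ Rs k ∧ U i ∈ Rs k ∧ V i ∈ Rs k := by
    intro i
    obtain ⟨a, ha⟩ := hmem (U i)
    obtain ⟨b, hb⟩ := hmem (V i)
    obtain ⟨c, hca, hcb⟩ := max2 a b
    obtain ⟨k, hk1, hk2⟩ := max2 i c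
    exact ⟨k, hk1, hk2 (hca ha), hk2 (hcb hb)⟩
  choose σ hσ1 hσ2 hσ3 using hUV
  have hf : ∀ i : I, ∃ x : Module.End R (⨁ _ : Ω, M), x ∉ Rs (σ i) := by
    intro i
    by_contra h
    push_neg at h
    exact hcon (σ i) ((Subring.eq_top_iff' _).mpr h)
  choose f hf using hf
  set g : Module.End R (⨁ _ : Ω, M) :=
    (ρ.symm : (⨁ _ : I × Ω, M) →ₗ[R] ⨁ _ : Ω, M) ∘ₗ blockMap R M f
    ∘ₗ (ρ : (⨁ _ : Ω, M) →ₗ[R] ⨁ _ : I × Ω, M) with hg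
  obtain ⟨k, hk⟩ := hmem g
  have hfk : f k = V k * g * U k := (hkey f k).symm
  have : f k ∈ Rs (σ k) := by
    rw [hfk]
    exact mul_mem (mul_mem (hσ3 k) (hσ1 k hk)) (hσ2 k)
  exact hf k this
end

section
/- Let R be a unital associative ring, M a nonzero left R-module, Ω an infinite set, and E = End_R(∏_{i∈Ω} M). Suppose (R_i)_{i∈I} is a chain of subrings of E (i.e., a family of subrings totally ordered by inclusion) such that ⋃_{i∈I} R_i = E and |I| ≤ |Ω|. Then E = R_i for some i ∈ I. In particular, E is not the union of a chain of ≤ |Ω| proper subrings. -/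
/-!
Since `|I| ≤ |Ω|` and `Ω` is infinite, `Ω ≃ I × Ω`, so `M^Ω ≅ (M^Ω)^I`. Hence any family `(g i)`
of endomorphisms assembles into one block-diagonal endomorphism `d`, and `g i = p i * d * e i`
with `p i`, `e i` the `i`-th block projection and embedding. If no `R_i` were all of `E`, pick
`g i ∉ R_i` and `R_{j i}` containing `R_i`, `e i` and `p i`. The block-diagonal `d` of
`(g (j i))_i` lies in some `R_m ⊆ R_{j m}`, so `g (j m) = p m * d * e m ∈ R_{j m}`.
-/

open Cardinal

universe u v

theorem Subring.exists_eq_top_of_directed_of_iUnion_eq_univ {E I : Type*} [Ring E]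
    {Rs : I → Subring E} (hdir : Directed (· ≤ ·) Rs)
    (hunion : ⋃ i, (Rs i : Set E) = Set.univ)
    (hblock : ∃ (e p : I → E) (diag : (I → E) → E), ∀ g i, p i * diag g * e i = g i) :
    ∃ i, Rs i = ⊤ := by
  obtain ⟨e, p, diag, hdiag⟩ := hblock
  have hmem (x : E) : ∃ i, x ∈ Rs i := Set.mem_iUnion.mp (hunion ▸ Set.mem_univ x)
  have hbound (i : I) : ∃ j, Rs i ≤ Rs j ∧ e i ∈ Rs j ∧ p i ∈ Rs j := by
    obtain ⟨a, ha⟩ := hmem (e i)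
    obtain ⟨b, hb⟩ := hmem (p i)
    obtain ⟨c, hac, hbc⟩ := hdir a b
    obtain ⟨j, hij, hcj⟩ := hdir i c
    exact ⟨j, hij, hcj (hac ha), hcj (hbc hb)⟩
  choose j hj he hp using hbound
  by_contra! hne
  have hout (i : I) : ∃ x, x ∉ Rs i := SetLike.exists_not_mem_of_ne_top _ (hne i)
  choose g hg using hout
  obtain ⟨m, hm⟩ := hmem (diag (g ∘ j))
  apply hg (j m)
  change (g ∘ j) m ∈ _
  rw [← hdiag (g ∘ j) m]
  exact mul_mem (mul_mem (hp m) (hj m hm)) (he m)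

theorem Module.End.exists_block_decomposition {R N I : Type*} [Semiring R] [AddCommMonoid N]
    [Module R N] (Φ : N ≃ₗ[R] (I → N)) :
    ∃ (e p : I → Module.End R N) (diag : (I → Module.End R N) → Module.End R N),
      ∀ g i, p i * diag g * e i = g i := by
  classical
  refine ⟨fun i => Φ.symm.toLinearMap ∘ₗ LinearMap.single R (fun _ => N) i,
    fun i => LinearMap.proj i ∘ₗ Φ.toLinearMap,
    fun g => Φ.symm.toLinearMap ∘ₗ LinearMap.pi (fun i => g i ∘ₗ LinearMap.proj i) ∘ₗ
      Φ.toLinearMap, fun g i => ?_⟩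
  ext x
  simp [Module.End.mul_apply]

theorem Cardinal.nonempty_prod_equiv_right_of_lift_mk_le {I : Type v} {Ω : Type u}
    [Infinite Ω] [Nonempty I] (h : lift.{u} #I ≤ lift.{v} #Ω) : Nonempty (I × Ω ≃ Ω) := by
  rw [← lift_mk_eq', mk_prod, lift_mul, lift_lift, lift_lift, lift_umax.{u, v}]
  exact mul_eq_right (aleph0_le_lift.mpr (aleph0_le_mk Ω)) h (by simp [mk_ne_zero])

theorem stmt5_general (R : Type*) [Ring R] (M : Type*) [AddCommGroup M] [Module R M]
    (Ω : Type u) [Infinite Ω] (I : Type v)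
    (Rs : I → Subring (Module.End R (Ω → M)))
    (hchain : ∀ i j : I, Rs i ≤ Rs j ∨ Rs j ≤ Rs i)
    (hunion : (⋃ i : I, (Rs i : Set (Module.End R (Ω → M)))) = Set.univ)
    (hcard : Cardinal.lift.{u} #I ≤ Cardinal.lift.{v} #Ω) :
    ∃ i : I, Rs i = ⊤ := by
  have hdir : Directed (· ≤ ·) Rs := fun i j =>
    (hchain i j).elim (fun h => ⟨j, h, le_rfl⟩) (fun h => ⟨i, le_rfl, h⟩)
  have : Nonempty I := (Set.mem_iUnion.mp (hunion ▸ Set.mem_univ 0)).nonempty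
  obtain ⟨σ⟩ := nonempty_prod_equiv_right_of_lift_mk_le hcard
  exact Subring.exists_eq_top_of_directed_of_iUnion_eq_univ hdir hunion
    (Module.End.exists_block_decomposition
      ((LinearEquiv.funCongrLeft R M σ).trans (LinearEquiv.curry R M I Ω)))

theorem stmt5 (R : Type*) [Ring R] (M : Type*) [AddCommGroup M] [Module R M]
    [Nontrivial M] (Ω : Type u) [Infinite Ω] (I : Type v)
    (Rs : I → Subring (Module.End R (Ω → M)))
    (hchain : ∀ i j : I, Rs i ≤ Rs j ∨ Rs j ≤ Rs i)
    (hunion : (⋃ i : I, (Rs i : Set (Module.End R (Ω → M)))) = Set.univ)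
    (hcard : Cardinal.lift.{u} #I ≤ Cardinal.lift.{v} #Ω) :
    ∃ i : I, Rs i = ⊤ :=
  stmt5_general R M Ω I Rs hchain hunion hcard
end

section
/- Let R be a unital associative ring, M a nonzero left R-module, Ω an infinite set, and E = End_R(⊕_{i∈Ω} M). If U is a generating set for E as a ring, then there exists a positive integer n such that every element of E is represented by a ring word of length at most n in elements of U. -/
open DirectSum

/-- `RingWordRep U n r` means `r` is represented by a ring word of length `n` in elements
of `U`: words of length 1 are elements of `U ∪ {0, 1, -1}`, and a word of length `m₁ + m₂`
is a sum or a product of words of lengths `m₁` and `m₂`. -/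
inductive RingWordRep {S : Type*} [Ring S] (U : Set S) : ℕ → S → Prop
  | base (r : S) (h : r ∈ U ∪ {0, 1, -1}) : RingWordRep U 1 r
  | add (p q : S) (m₁ m₂ : ℕ) (hp : RingWordRep U m₁ p) (hq : RingWordRep U m₂ q) :
      RingWordRep U (m₁ + m₂) (p + q)
  | mul (p q : S) (m₁ m₂ : ℕ) (hp : RingWordRep U m₁ p) (hq : RingWordRep U m₂ q) :
      RingWordRep U (m₁ + m₂) (p * q)

section Aux

variable {R : Type*} [Ring R] {M : Type*} [AddCommGroup M] [Module R M]
  {Ω : Type*} [DecidableEq Ω]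

/-- The "n-th inclusion" `A → A` induced by `ω ↦ e (n, ω)`. -/
noncomputable def auxS (e : ℕ × Ω ≃ Ω) (n : ℕ) :
    (⨁ _ : Ω, M) →ₗ[R] (⨁ _ : Ω, M) :=
  DirectSum.toModule R Ω _ fun ω => DirectSum.lof R Ω (fun _ => M) (e (n, ω))

/-- The "n-th projection" `A → A`. -/
noncomputable def auxT (e : ℕ × Ω ≃ Ω) (n : ℕ) :
    (⨁ _ : Ω, M) →ₗ[R] (⨁ _ : Ω, M) :=
  DirectSum.toModule R Ω _ fun ω' =>
    if (e.symm ω').1 = n then DirectSum.lof R Ω (fun _ => M) (e.symm ω').2 else 0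

lemma auxT_comp_auxS (e : ℕ × Ω ≃ Ω) (n : ℕ) :
    (auxT (R := R) (M := M) e n) ∘ₗ (auxS e n) = LinearMap.id := by
  ext ω m
  simp [auxS, auxT]

/-- The "diagonal" endomorphism built from a sequence of endomorphisms. -/
noncomputable def auxG (e : ℕ × Ω ≃ Ω) (f : ℕ → Module.End R (⨁ _ : Ω, M)) :
    (⨁ _ : Ω, M) →ₗ[R] (⨁ _ : Ω, M) :=
  DirectSum.toModule R Ω _ fun ω' =>
    (auxS e (e.symm ω').1) ∘ₗ (f (e.symm ω').1) ∘ₗ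
      DirectSum.lof R Ω (fun _ => M) (e.symm ω').2

lemma auxT_comp_auxG_comp_auxS (e : ℕ × Ω ≃ Ω) (f : ℕ → Module.End R (⨁ _ : Ω, M))
    (n : ℕ) :
    (auxT (R := R) (M := M) e n) ∘ₗ (auxG (R := R) (M := M) e f) ∘ₗ (auxS (R := R) (M := M) e n) = f n := by
  ext ω m
  have h1 : (auxG (R := R) (M := M) e f) ((auxS (R := R) (M := M) e n)
        (DirectSum.lof R Ω (fun _ => M) ω m)) =
      (auxS (R := R) (M := M) e n) (f n (DirectSum.lof R Ω (fun _ => M) ω m)) := by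
    simp [auxS, auxG]
  have h2 := congrArg (fun g => g (f n (DirectSum.lof R Ω (fun _ => M) ω m)))
    (auxT_comp_auxS (R := R) (M := M) e n)
  simp only [LinearMap.comp_apply, LinearMap.coe_comp, Function.comp_apply, h1,
    LinearMap.id_apply] at h2 ⊢
  rw [h2]

end Aux

theorem stmt6 (R : Type*) [Ring R] (M : Type*) [AddCommGroup M] [Module R M]
    [Nontrivial M] (Ω : Type*) [Infinite Ω]
    (U : Set (Module.End R (⨁ _ : Ω, M)))
    (hgen : Subring.closure U = ⊤) :
    ∃ n : ℕ, 0 < n ∧ ∀ f : Module.End R (⨁ _ : Ω, M), ∃ m ≤ n, RingWordRep U m f := by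
  classical
  -- every element of E is represented by some word
  have exhaustive : ∀ f : Module.End R (⨁ _ : Ω, M), ∃ n, RingWordRep U n f := by
    intro f
    have hf : f ∈ Subring.closure U := by rw [hgen]; trivial
    induction hf using Subring.closure_induction with
    | mem x hx => exact ⟨1, .base x (Or.inl hx)⟩
    | zero => exact ⟨1, .base 0 (Or.inr (Set.mem_insert 0 _))⟩
    | one => exact ⟨1, .base 1 (Or.inr (Set.mem_insert_iff.mpr (Or.inr (Set.mem_insert 1 _))))⟩
    | add x y hx hy ihx ihy =>
      obtain ⟨n, hn⟩ := ihx; obtain ⟨m, hm⟩ := ihy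
      exact ⟨n + m, .add x y n m hn hm⟩
    | neg x hx ihx =>
      obtain ⟨n, hn⟩ := ihx
      refine ⟨1 + n, ?_⟩
      have hx' : -x = -1 * x := (neg_one_mul x).symm
      rw [hx']
      exact .mul (-1) x 1 n (.base (-1) (Or.inr (Set.mem_insert_iff.mpr (Or.inr (Set.mem_insert_iff.mpr (Or.inr rfl)))))) hn
    | mul x y hx hy ihx ihy =>
      obtain ⟨n, hn⟩ := ihx; obtain ⟨m, hm⟩ := ihy
      exact ⟨n + m, .mul x y n m hn hm⟩
  by_contra hcon
  push_neg at hcon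
  -- get an equivalence ℕ × Ω ≃ Ω
  have hcard : Nonempty (ℕ × Ω ≃ Ω) := by
    rw [← Cardinal.eq, Cardinal.mk_prod, Cardinal.mk_nat, Cardinal.lift_aleph0,
      Cardinal.lift_id', Cardinal.aleph0_mul_mk_eq]
  obtain ⟨e⟩ := hcard
  choose k hk using fun n => exhaustive (auxS (R := R) (M := M) e n)
  choose l hl using fun n => exhaustive (auxT (R := R) (M := M) e n)
  choose f hf using fun n => hcon (k n + l n + n + 1) (by positivity)
  obtain ⟨N, hN⟩ := exhaustive (auxG e f)
  have key : f N = (auxT (R := R) (M := M) e N) * (auxG e f) * (auxS e N) := by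
    have := auxT_comp_auxG_comp_auxS (R := R) (M := M) e f N
    rw [← this]
    rfl
  have hrep : RingWordRep U (l N + N + k N) (f N) := by
    rw [key]
    exact .mul _ _ (l N + N) (k N) (.mul _ _ (l N) N (hl N) hN) (hk N)
  exact hf N (l N + N + k N) (by omega) hrep
end

section
/- Let R be a unital associative ring, M a nonzero left R-module, Ω an infinite set, and E = End_R(∏_{i∈Ω} M). If U is a generating set for E as a ring, then there exists a positive integer n such that every element of E is represented by a ring word of length at most n in elements of U. -/
section Aux

variable {R : Type*} [Ring R] {M : Type*} [AddCommGroup M] [Module R M]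
  {Ω : Type*} (σ : (ℕ × Ω) ≃ Ω)

/-- Inclusion of the `k`-th block. -/
def jmap (k : ℕ) : Module.End R (Ω → M) where
  toFun x ω := if (σ.symm ω).1 = k then x (σ.symm ω).2 else 0
  map_add' x y := by funext ω; by_cases h : (σ.symm ω).1 = k <;> simp [h]
  map_smul' r x := by funext ω; by_cases h : (σ.symm ω).1 = k <;> simp [h]

/-- Projection onto the `k`-th block. -/
def pmap (k : ℕ) : Module.End R (Ω → M) where
  toFun x ω := x (σ (k, ω))
  map_add' _ _ := rfl
  map_smul' _ _ := rfl

/-- The "diagonal" endomorphism acting blockwise by `g k` on the `k`-th block. -/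
def dmap (g : ℕ → Module.End R (Ω → M)) : Module.End R (Ω → M) where
  toFun x ω := g (σ.symm ω).1 (fun ω' => x (σ ((σ.symm ω).1, ω'))) (σ.symm ω).2
  map_add' x y := funext fun ω => congrFun ((g (σ.symm ω).1).map_add _ _) _
  map_smul' r x := funext fun ω => congrFun ((g (σ.symm ω).1).map_smul r _) _

lemma pmap_dmap_jmap (g : ℕ → Module.End R (Ω → M)) (k : ℕ) :
    pmap σ k * dmap σ g * jmap σ k = g k := by
  ext x ω
  simp [pmap, dmap, jmap, Module.End.mul_apply]

lemma RingWordRep.pos {S : Type*} [Ring S] {U : Set S} {m : ℕ} {r : S}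
    (h : RingWordRep U m r) : 0 < m := by
  induction h <;> omega

end Aux

theorem stmt7 (R : Type*) [Ring R] (M : Type*) [AddCommGroup M] [Module R M]
    [Nontrivial M] (Ω : Type*) [Infinite Ω]
    (U : Set (Module.End R (Ω → M)))
    (hgen : Subring.closure U = ⊤) :
    ∃ n : ℕ, 0 < n ∧ ∀ f : Module.End R (Ω → M), ∃ m ≤ n, RingWordRep U m f := by
  classical
  -- every endomorphism is represented by some word
  have hall : ∀ f : Module.End R (Ω → M), ∃ m, RingWordRep U m f := by
    intro f
    have hf : f ∈ Subring.closure U := by rw [hgen]; exact Subring.mem_top f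
    induction hf using Subring.closure_induction with
    | mem x hx => exact ⟨1, .base x (Or.inl hx)⟩
    | zero => exact ⟨1, .base 0 (Or.inr (by simp))⟩
    | one => exact ⟨1, .base 1 (Or.inr (by simp))⟩
    | add x y hx hy ihx ihy =>
      obtain ⟨m₁, h₁⟩ := ihx; obtain ⟨m₂, h₂⟩ := ihy
      exact ⟨m₁ + m₂, .add x y m₁ m₂ h₁ h₂⟩
    | neg x hx ihx =>
      obtain ⟨m, h⟩ := ihx
      have : -x = (-1 : Module.End R (Ω → M)) * x := (neg_one_mul x).symm
      exact ⟨1 + m, this ▸ .mul _ x 1 m (.base (-1) (Or.inr (by simp))) h⟩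
    | mul x y hx hy ihx ihy =>
      obtain ⟨m₁, h₁⟩ := ihx; obtain ⟨m₂, h₂⟩ := ihy
      exact ⟨m₁ + m₂, .mul x y m₁ m₂ h₁ h₂⟩
  -- a bijection `ℕ × Ω ≃ Ω`
  obtain ⟨σ⟩ : Nonempty ((ℕ × Ω) ≃ Ω) := by
    rw [← Cardinal.eq]
    simp [Cardinal.mk_prod, Cardinal.aleph0_mul_eq (Cardinal.aleph0_le_mk Ω)]
  by_contra hcon
  push_neg at hcon
  -- representation lengths for the projections and inclusions
  choose a ha using fun k => hall (pmap σ k : Module.End R (Ω → M))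
  choose b hb using fun k => hall (jmap σ k : Module.End R (Ω → M))
  -- pick, for each `k`, an element not representable with length ≤ k + a k + b k
  have hpos : ∀ k : ℕ, 0 < k + a k + b k := fun k => by
    have := (ha k).pos; omega
  choose g hg using fun k => hcon (k + a k + b k) (hpos k)
  -- the diagonal of `g` has some representation length `m`
  obtain ⟨m, hm⟩ := hall (dmap σ g)
  -- then `g m` is representable with length `a m + m + b m ≤ m + a m + b m`
  have hrep : RingWordRep U (a m + m + b m) (g m) := by
    rw [← pmap_dmap_jmap σ g m]
    exact .mul _ _ _ _ (.mul _ _ _ _ (ha m) hm) (hb m)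
  exact hg m (a m + m + b m) (by omega) hrep
end

section
/- Let R be a unital associative ring, M a nonzero left R-module, Ω an infinite set, N = ⊕_{i∈Ω} M, and E = End_R(N). If U ⊆ E has a full moiety Σ ⊆ Ω, then there exist two elements x, y ∈ E such that E is generated as a ring by U ∪ {x, y}. -/
open DirectSum Cardinal

theorem stmt8 (R : Type*) [Ring R] (M : Type*) [AddCommGroup M] [Module R M]
    [Nontrivial M] (Ω : Type*) [Infinite Ω]
    (U : Set (Module.End R (⨁ _ : Ω, M))) (S : Set Ω)
    (hmoiety : #(↥S) = #Ω ∧ #(↥(Sᶜ : Set Ω)) = #Ω)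
    (hfull : IsFull R M Ω U S) :
    ∃ x y : Module.End R (⨁ _ : Ω, M), Subring.closure (U ∪ {x, y}) = ⊤ := by
  classical
  obtain ⟨e⟩ : Nonempty (Ω ≃ ↥S) := (Cardinal.eq.mp hmoiety.1).map Equiv.symm
  set x : Module.End R (⨁ _ : Ω, M) :=
    DirectSum.toModule R Ω (⨁ _ : Ω, M) (fun i => DirectSum.lof R Ω (fun _ => M) (e i : Ω))
    with hxdef
  set y : Module.End R (⨁ _ : Ω, M) :=
    DirectSum.toModule R Ω (⨁ _ : Ω, M) (fun i =>
      if h : i ∈ S then DirectSum.lof R Ω (fun _ => M) ((e.symm ⟨i, h⟩ : Ω)) else 0)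
    with hydef
  have hyx : ∀ v, y (x v) = v := by
    intro v
    have : (y ∘ₗ x : Module.End R (⨁ _ : Ω, M)) = LinearMap.id := by
      apply DirectSum.linearMap_ext
      intro i
      ext m
      simp only [LinearMap.comp_apply, hxdef, hydef, DirectSum.toModule_lof]
      rw [dif_pos (e i).2]
      simp [Subtype.coe_eta]
    exact congrArg (fun (f : Module.End R (⨁ _ : Ω, M)) => f v) this
  have hx : ∀ v, x v ∈ suppSubmodule R M Ω S := by
    intro v
    induction v using DirectSum.induction_on with
    | zero => simp only [map_zero]; exact (suppSubmodule R M Ω S).zero_mem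
    | of i m =>
      rw [show ((DirectSum.of (fun _ : Ω => M) i m : ⨁ _ : Ω, M)) =
          DirectSum.lof R Ω (fun _ => M) i m from rfl]
      rw [hxdef]
      rw [DirectSum.toModule_lof]
      intro j hj
      exact DirectSum.of_eq_of_ne _ _ _ (fun hij => hj (hij ▸ (e i).2))
    | add a b ha hb =>
      rw [map_add]
      exact (suppSubmodule R M Ω S).add_mem ha hb
  -- Main: every endomorphism lies in the closure.
  refine ⟨x, y, eq_top_iff.mpr fun t _ => ?_⟩
  set g : Module.End R (suppSubmodule R M Ω S) :=
    LinearMap.codRestrict (suppSubmodule R M Ω S)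
      ((x ∘ₗ t ∘ₗ y) ∘ₗ (suppSubmodule R M Ω S).subtype) (fun w => hx _) with hgdef
  obtain ⟨f, hfU, -, -, hgf⟩ := hfull g
  have key : t = y * f * x := by
    refine LinearMap.ext fun v => ?_
    have h1 : f (x v) = (g ⟨x v, hx v⟩ : ⨁ _ : Ω, M) := hgf ⟨x v, hx v⟩
    have h2 : (g ⟨x v, hx v⟩ : ⨁ _ : Ω, M) = x (t (y (x v))) := rfl
    show t v = y (f (x v))
    rw [h1, h2, hyx, hyx]
  rw [key]
  have hxmem : x ∈ Subring.closure (U ∪ {x, y}) :=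
    Subring.subset_closure (Or.inr (Or.inl rfl))
  have hymem : y ∈ Subring.closure (U ∪ {x, y}) :=
    Subring.subset_closure (Or.inr (Or.inr rfl))
  have hfmem : f ∈ Subring.closure (U ∪ {x, y}) :=
    Subring.subset_closure (Or.inl hfU)
  exact mul_mem (mul_mem hymem hfmem) hxmem
end

section
/- Let R be a unital associative ring, M a nonzero left R-module, Ω an infinite set, N = ⊕_{i∈Ω} M, and E = End_R(N). Let Σ ⊆ Ω be full with respect to a subset U ⊆ E, and let π_Σ ∈ E denote the projection of N onto M^Σ along M^{Ω\Σ}. Then π_Σ U π_Σ = E_{[Σ]}, i.e., {π_Σ u π_Σ : u ∈ U} = {f ∈ E : M^Σ f ⊆ M^Σ and M^{Ω\Σ} f = {0}}. -/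
open Pointwise DirectSum

theorem stmt11 (R : Type*) [Ring R] (M : Type*) [AddCommGroup M] [Module R M]
    [Nontrivial M] (Ω : Type*) [Infinite Ω] (S : Set Ω)
    (U : Set (Module.End R (⨁ _ : Ω, M)))
    (hfull : IsFull R M Ω U S)
    (πS : Module.End R (⨁ _ : Ω, M))
    (hS1 : ∀ v ∈ suppSubmodule R M Ω S, πS v = v)
    (hS0 : ∀ v ∈ suppSubmodule R M Ω Sᶜ, πS v = 0) :
    ({πS} * U * {πS} : Set (Module.End R (⨁ _ : Ω, M))) =
      {f : Module.End R (⨁ _ : Ω, M) |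
        (suppSubmodule R M Ω S).map f ≤ suppSubmodule R M Ω S ∧
        (suppSubmodule R M Ω Sᶜ).map f = ⊥} := by
  classical
  -- decomposition of any element into its `S`-part and `Sᶜ`-part
  have hdecomp : ∀ x : ⨁ _ : Ω, M, ∃ a ∈ suppSubmodule R M Ω S,
      ∃ b ∈ suppSubmodule R M Ω Sᶜ, x = a + b := by
    intro x
    refine ⟨DFinsupp.filter (· ∈ S) x, ?_, DFinsupp.filter (· ∉ S) x, ?_, ?_⟩
    · intro i hi
      exact DFinsupp.filter_apply_neg _ hi
    · intro i hi
      exact DFinsupp.filter_apply_neg _ (by simpa using hi)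
    · exact (DFinsupp.filter_pos_add_filter_neg x _).symm
  -- πS sends everything into M^S
  have hrange : ∀ x : ⨁ _ : Ω, M, πS x ∈ suppSubmodule R M Ω S := by
    intro x
    obtain ⟨a, ha, b, hb, rfl⟩ := hdecomp x
    rw [map_add, hS1 a ha, hS0 b hb, add_zero]
    exact ha
  have hπ : ∀ x : ⨁ _ : Ω, M, ∀ a ∈ suppSubmodule R M Ω S,
      ∀ b ∈ suppSubmodule R M Ω Sᶜ, x = a + b → πS x = a := by
    intro x a ha b hb hx
    rw [hx, map_add, hS1 a ha, hS0 b hb, add_zero]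
  ext f
  simp only [Set.mem_mul, Set.mem_singleton_iff, Set.mem_setOf_eq,
    exists_eq_left, exists_eq_right]
  constructor
  · rintro ⟨g, ⟨u, hu, rfl⟩, rfl⟩
    constructor
    · rintro y ⟨x, hx, rfl⟩
      exact hrange _
    · rw [Submodule.eq_bot_iff]
      rintro y ⟨x, hx, rfl⟩
      simp only [Module.End.mul_apply]
      rw [hS0 x hx, map_zero, map_zero]
  · rintro ⟨h1, h0⟩
    -- the restriction of f to M^S
    set g : Module.End R (suppSubmodule R M Ω S) :=
      f.restrict (p := suppSubmodule R M Ω S) (q := suppSubmodule R M Ω S)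
        (fun x hx => h1 ⟨x, hx, rfl⟩) with hg
    obtain ⟨u, hu, -, -, hres⟩ := hfull g
    refine ⟨πS * u, ⟨u, hu, rfl⟩, ?_⟩
    refine LinearMap.ext fun x => ?_
    obtain ⟨a, ha, b, hb, hx⟩ := hdecomp x
    have hπx : πS x = a := hπ x a ha b hb hx
    have hfb : f b = 0 := by
      rw [Submodule.eq_bot_iff] at h0
      exact h0 _ ⟨b, hb, rfl⟩
    have hua : u a = f a := hres ⟨a, ha⟩
    have hfa : f a ∈ suppSubmodule R M Ω S := h1 ⟨a, ha, rfl⟩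
    simp only [Module.End.mul_apply]
    rw [hπx, hua, hS1 _ hfa, hx, map_add, hfb, add_zero]
end
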